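/- Let f be a norm on ℝ^p with dual norm f*, let (a, b) be a linear classifier with a ≠ 0, and let x_F ∈ ℝ^p satisfy ⟪a, x_F⟫ < b (so x_F does not lie on the hyperplane). Set d := (b − ⟪a, x_F⟫) / f*(a). Then for any v ∈ ℝ^p, the point x_F + d • v is an optimal counterfactual of x_F under f if and only if f(v) ≤ 1 and ⟪a, v⟫ = f*(a). -/
import Mathlib


open Finset

noncomputable section

/-- The standard inner product on `Fin p → ℝ`. -/
def dot {p : ℕ} (a x : Fin p → ℝ) : ℝ := ∑ k, a k * x k

/-- `f` is a norm on `ℝ^p`. -/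
def IsNorm {p : ℕ} (f : (Fin p → ℝ) → ℝ) : Prop :=
  (∀ x, f x = 0 ↔ x = 0) ∧ (∀ (c : ℝ) (x : Fin p → ℝ), f (c • x) = |c| * f x) ∧
    (∀ x y, f (x + y) ≤ f x + f y)

/-- The dual norm `f*(w) = sup { ⟪w, v⟫ : f v ≤ 1 }`. -/
def dualNorm {p : ℕ} (f : (Fin p → ℝ) → ℝ) (w : Fin p → ℝ) : ℝ :=
  sSup {t : ℝ | ∃ v : Fin p → ℝ, f v ≤ 1 ∧ t = dot w v}

/-- `xCF` is an optimal counterfactual of the factual `xF` (classified 'No') under norm `f`. -/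
def IsOptCF {p : ℕ} (a : Fin p → ℝ) (b : ℝ) (f : (Fin p → ℝ) → ℝ)
    (xF xCF : Fin p → ℝ) : Prop :=
  b ≤ dot a xCF ∧ ∀ z : Fin p → ℝ, b ≤ dot a z → f (xCF - xF) ≤ f (z - xF)

/-- `xRCF` is an optimal robust counterfactual of the factual `xF` (classified 'No')
under norm `f`, with robustness norm `g` and radius `ρ`. -/
def IsOptRCF {p : ℕ} (a : Fin p → ℝ) (b : ℝ) (f g : (Fin p → ℝ) → ℝ) (ρ : ℝ)
    (xF xRCF : Fin p → ℝ) : Prop :=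
  (∀ s : Fin p → ℝ, g s ≤ ρ → b ≤ dot a (xRCF + s)) ∧
    ∀ z : Fin p → ℝ, (∀ s : Fin p → ℝ, g s ≤ ρ → b ≤ dot a (z + s)) →
      f (xRCF - xF) ≤ f (z - xF)

/-- `w` is a subgradient of `f` at `x₀`. -/
def IsSubgradient {p : ℕ} (f : (Fin p → ℝ) → ℝ) (x₀ w : Fin p → ℝ) : Prop :=
  ∀ y : Fin p → ℝ, f x₀ + dot w (y - x₀) ≤ f y

section AuxCF
variable {p : ℕ} {f : (Fin p → ℝ) → ℝ}

lemma dot_smul' (a : Fin p → ℝ) (c : ℝ) (x : Fin p → ℝ) :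
    dot a (c • x) = c * dot a x := by
  simp [dot, Finset.mul_sum, mul_left_comm]

lemma dot_add' (a x y : Fin p → ℝ) : dot a (x + y) = dot a x + dot a y := by
  simp [dot, mul_add, Finset.sum_add_distrib]

lemma dot_sub' (a x y : Fin p → ℝ) : dot a (x - y) = dot a x - dot a y := by
  simp [dot, mul_sub, Finset.sum_sub_distrib]

lemma f_zero (hf : IsNorm f) : f 0 = 0 := (hf.1 0).mpr rfl

lemma f_neg (hf : IsNorm f) (x : Fin p → ℝ) : f (-x) = f x := by
  simpa using hf.2.1 (-1) x

lemma f_nonneg (hf : IsNorm f) (x : Fin p → ℝ) : 0 ≤ f x := by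
  have h := hf.2.2 x (-x)
  rw [add_neg_cancel, f_zero hf, f_neg hf] at h
  linarith

lemma f_pos (hf : IsNorm f) {x : Fin p → ℝ} (hx : x ≠ 0) : 0 < f x :=
  lt_of_le_of_ne (f_nonneg hf x) (fun h => hx ((hf.1 x).mp h.symm))

lemma f_sum_le (hf : IsNorm f) {ι : Type*} (s : Finset ι) (g : ι → (Fin p → ℝ)) :
    f (∑ i ∈ s, g i) ≤ ∑ i ∈ s, f (g i) := by
  induction s using Finset.cons_induction with
  | empty => simp [f_zero hf]
  | cons i s h ih =>
    rw [Finset.sum_cons, Finset.sum_cons]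
    exact le_trans (hf.2.2 _ _) (by linarith)

lemma f_le_mul_norm (hf : IsNorm f) (x : Fin p → ℝ) :
    f x ≤ (∑ k, f (Pi.single k 1)) * ‖x‖ := by
  have hx : x = ∑ k, x k • (Pi.single k (1:ℝ) : Fin p → ℝ) := by
    ext j; simp [Pi.single_apply]
  calc f x = f (∑ k, x k • (Pi.single k (1:ℝ) : Fin p → ℝ)) := by rw [← hx]
    _ ≤ ∑ k, f (x k • (Pi.single k (1:ℝ) : Fin p → ℝ)) := f_sum_le hf _ _
    _ = ∑ k, |x k| * f (Pi.single k 1) := by simp [hf.2.1]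
    _ ≤ ∑ k, ‖x‖ * f (Pi.single k 1) := by
        refine Finset.sum_le_sum fun k _ => ?_
        exact mul_le_mul_of_nonneg_right (norm_le_pi_norm x k) (f_nonneg hf _)
    _ = (∑ k, f (Pi.single k 1)) * ‖x‖ := by rw [← Finset.mul_sum, mul_comm]

lemma f_continuous (hf : IsNorm f) : Continuous f := by
  set M := ∑ k, f (Pi.single k (1:ℝ)) with hM
  have hM0 : 0 ≤ M := Finset.sum_nonneg fun k _ => f_nonneg hf _
  have key : ∀ x y : Fin p → ℝ, f x - f y ≤ M * ‖x - y‖ := by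
    intro x y
    have := hf.2.2 y (x - y)
    rw [add_sub_cancel] at this
    have := f_le_mul_norm hf (x - y)
    linarith
  have : LipschitzWith (Real.toNNReal M) f := by
    refine LipschitzWith.of_dist_le_mul fun x y => ?_
    rw [Real.dist_eq, Real.coe_toNNReal _ hM0, dist_eq_norm]
    rcases abs_cases (f x - f y) with ⟨h, _⟩ | ⟨h, _⟩
    · rw [h]; exact key x y
    · rw [h]; have h2 := key y x
      rw [← neg_sub x y, norm_neg] at h2; linarith
  exact this.continuous

lemma f_lower (hp : 1 ≤ p) (hf : IsNorm f) :
    ∃ c > 0, ∀ x, c * ‖x‖ ≤ f x := by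
  haveI : Nonempty (Fin p) := ⟨⟨0, hp⟩⟩
  have hK : IsCompact (Metric.sphere (0 : Fin p → ℝ) 1) := isCompact_sphere 0 1
  have hne : (Metric.sphere (0 : Fin p → ℝ) 1).Nonempty :=
    NormedSpace.sphere_nonempty.mpr zero_le_one
  obtain ⟨x₀, hx₀, hmin⟩ := hK.exists_isMinOn hne (f_continuous hf).continuousOn
  have hx₀n : ‖x₀‖ = 1 := by simpa using mem_sphere_iff_norm.mp hx₀
  have hx₀0 : x₀ ≠ 0 := by intro h; rw [h, norm_zero] at hx₀n; norm_num at hx₀n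
  refine ⟨f x₀, f_pos hf hx₀0, fun x => ?_⟩
  rcases eq_or_ne x 0 with rfl | hx
  · simp [f_zero hf]
  · have hxn : (0:ℝ) < ‖x‖ := norm_pos_iff.mpr hx
    have hu : (‖x‖⁻¹ • x) ∈ Metric.sphere (0 : Fin p → ℝ) 1 := by
      rw [mem_sphere_iff_norm, sub_zero, norm_smul, norm_inv, norm_norm,
        inv_mul_cancel₀ hxn.ne']
    have h1 : f x₀ ≤ f (‖x‖⁻¹ • x) := hmin hu
    have h2 : f (‖x‖⁻¹ • x) = ‖x‖⁻¹ * f x := by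
      rw [hf.2.1, abs_of_pos (inv_pos.mpr hxn)]
    rw [h2] at h1
    have := mul_le_mul_of_nonneg_right h1 hxn.le
    calc f x₀ * ‖x‖ ≤ ‖x‖⁻¹ * f x * ‖x‖ := this
      _ = f x := by field_simp

end AuxCF

section Dual
variable {p : ℕ} {f : (Fin p → ℝ) → ℝ} {a : Fin p → ℝ}

lemma dual_nonempty (hf : IsNorm f) :
    Set.Nonempty {t : ℝ | ∃ v : Fin p → ℝ, f v ≤ 1 ∧ t = dot a v} :=
  ⟨0, 0, by simp [f_zero hf], by simp [dot]⟩

lemma dual_bdd (hp : 1 ≤ p) (hf : IsNorm f) :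
    BddAbove {t : ℝ | ∃ v : Fin p → ℝ, f v ≤ 1 ∧ t = dot a v} := by
  obtain ⟨c, hc, hcf⟩ := f_lower hp hf
  refine ⟨(∑ k, |a k|) * c⁻¹, ?_⟩
  rintro t ⟨v, hv, rfl⟩
  have hvn : ‖v‖ ≤ c⁻¹ := by
    have h1 : c * ‖v‖ ≤ 1 := le_trans (hcf v) hv
    calc ‖v‖ = c⁻¹ * (c * ‖v‖) := by field_simp
      _ ≤ c⁻¹ * 1 := mul_le_mul_of_nonneg_left h1 (inv_pos.mpr hc).le
      _ = c⁻¹ := mul_one _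
  calc dot a v ≤ ∑ k, |a k| * |v k| := by
        refine Finset.sum_le_sum fun k _ => ?_
        rw [← abs_mul]; exact le_abs_self _
    _ ≤ ∑ k, |a k| * c⁻¹ := by
        refine Finset.sum_le_sum fun k _ => ?_
        refine mul_le_mul_of_nonneg_left (le_trans ?_ hvn) (abs_nonneg _)
        simpa [Real.norm_eq_abs] using norm_le_pi_norm v k
    _ = (∑ k, |a k|) * c⁻¹ := by rw [Finset.sum_mul]

lemma dual_le (hp : 1 ≤ p) (hf : IsNorm f) {v : Fin p → ℝ} (hv : f v ≤ 1) :
    dot a v ≤ dualNorm f a :=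
  le_csSup (dual_bdd hp hf) ⟨v, hv, rfl⟩

lemma dual_key (hp : 1 ≤ p) (hf : IsNorm f) (v : Fin p → ℝ) :
    dot a v ≤ dualNorm f a * f v := by
  rcases eq_or_ne v 0 with rfl | hv
  · simp [dot, f_zero hf]
  · have hfv : 0 < f v := f_pos hf hv
    have h1 : f ((f v)⁻¹ • v) ≤ 1 := by
      rw [hf.2.1, abs_of_pos (inv_pos.mpr hfv), inv_mul_cancel₀ hfv.ne']
    have h2 := dual_le (a := a) hp hf h1
    rw [dot_smul'] at h2
    calc dot a v = f v * ((f v)⁻¹ * dot a v) := by field_simp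
      _ ≤ f v * dualNorm f a := by
          refine mul_le_mul_of_nonneg_left h2 hfv.le
      _ = dualNorm f a * f v := mul_comm _ _

lemma dual_pos (hp : 1 ≤ p) (hf : IsNorm f) (ha : a ≠ 0) : 0 < dualNorm f a := by
  have hfa : 0 < f a := f_pos hf ha
  have h1 : f ((f a)⁻¹ • a) ≤ 1 := by
    rw [hf.2.1, abs_of_pos (inv_pos.mpr hfa), inv_mul_cancel₀ hfa.ne']
  have h2 := dual_le (a := a) hp hf h1
  rw [dot_smul'] at h2
  have haa : 0 < dot a a := by
    obtain ⟨k, hk⟩ := Function.ne_iff.mp ha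
    exact Finset.sum_pos' (fun j _ => mul_self_nonneg _)
      ⟨k, Finset.mem_univ k, mul_self_pos.mpr hk⟩
  calc (0:ℝ) < (f a)⁻¹ * dot a a := by positivity
    _ ≤ dualNorm f a := h2

end Dual

/-- The direction of optimal counterfactuals (Lemma 2): `x_F + d • v` with
`d = (b − ⟪a, x_F⟫)/f*(a)` is an optimal counterfactual iff `f(v) ≤ 1` and
`⟪a, v⟫ = f*(a)`. -/
theorem cf_direction {p : ℕ} (hp : 1 ≤ p)
    (f : (Fin p → ℝ) → ℝ) (hf : IsNorm f)
    (a : Fin p → ℝ) (ha : a ≠ 0) (b : ℝ) (xF : Fin p → ℝ)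
    (hxF : dot a xF < b) (v : Fin p → ℝ) :
    IsOptCF a b f xF (xF + ((b - dot a xF) / dualNorm f a) • v) ↔
      (f v ≤ 1 ∧ dot a v = dualNorm f a) := by
  have hbA : 0 < b - dot a xF := sub_pos.mpr hxF
  have hDpos : 0 < dualNorm f a := dual_pos hp hf ha
  set A := dot a xF with hA
  set D := dualNorm f a with hDdef
  set d := (b - A) / D with hd
  have hdpos : 0 < d := div_pos hbA hDpos
  have hdD : d * D = b - A := div_mul_cancel₀ _ hDpos.ne'
  have hsub : ∀ w : Fin p → ℝ, (xF + w) - xF = w := fun w => add_sub_cancel_left xF w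
  constructor
  · rintro ⟨hfeas, hopt⟩
    rw [dot_add', dot_smul'] at hfeas
    have hge : D ≤ dot a v := by
      have h1 : d * D ≤ d * dot a v := by linarith
      exact le_of_mul_le_mul_left h1 hdpos
    have hfv : f v ≤ 1 := by
      by_contra hgt
      push_neg at hgt
      have hfvpos : 0 < f v := lt_trans one_pos hgt
      set ε := D - (b - A) / (d * f v) with hε
      have hDd : D * (d * f v) = (b - A) * f v := by
        rw [show D * (d * f v) = d * D * f v by ring, hdD]
      have hεpos : 0 < ε := by
        rw [hε, sub_pos, div_lt_iff₀ (by positivity)]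
        nlinarith
      have hDε : D - ε = (b - A) / (d * f v) := by rw [hε]; ring
      have hDεpos : 0 < D - ε := by rw [hDε]; positivity
      obtain ⟨t, ht, htgt⟩ := exists_lt_of_lt_csSup (dual_nonempty hf (a := a))
        (show D - ε < dualNorm f a by rw [← hDdef]; linarith)
      obtain ⟨w, hw, rfl⟩ := ht
      have hwpos : 0 < dot a w := lt_trans hDεpos htgt
      set t := (b - A) / dot a w with htdef
      have htpos : 0 < t := div_pos hbA hwpos
      have hz : b ≤ dot a (xF + t • w) := by
        rw [dot_add', dot_smul', ← hA, htdef, div_mul_cancel₀ _ hwpos.ne']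
        linarith
      have h2 := hopt _ hz
      rw [hsub, hsub, hf.2.1, hf.2.1, abs_of_pos hdpos, abs_of_pos htpos] at h2
      have h3 : t * f w ≤ t := by nlinarith
      have h4 : t < (b - A) / (D - ε) :=
        div_lt_div_of_pos_left hbA hDεpos htgt
      have h5 : (b - A) / (D - ε) = d * f v := by
        rw [hDε, div_div_eq_mul_div, mul_comm, mul_div_assoc, div_self hbA.ne', mul_one]
      nlinarith
    refine ⟨hfv, le_antisymm ?_ hge⟩
    calc dot a v ≤ D * f v := dual_key hp hf v
      _ ≤ D * 1 := mul_le_mul_of_nonneg_left hfv hDpos.le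
      _ = D := mul_one D
  · rintro ⟨hfv, hdot⟩
    have hfv1 : f v = 1 := by
      have h1 := dual_key (a := a) hp hf v
      rw [hdot] at h1
      have : 1 ≤ f v := by nlinarith
      linarith
    constructor
    · rw [dot_add', dot_smul', hdot, ← hA, hdD]; linarith
    · intro z hz
      rw [hsub, hf.2.1, abs_of_pos hdpos, hfv1, mul_one]
      have h1 := dual_key (a := a) hp hf (z - xF)
      rw [dot_sub'] at h1
      have h2 : d * D ≤ D * f (z - xF) := by rw [hdD]; linarith
      rw [mul_comm d D] at h2
      exact le_of_mul_le_mul_left h2 hDpos
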